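/- For every integer d ≥ 3, the hypercube Q_d satisfies dim(Q_d) − 1 ≤ edim(Q_d) ≤ dim(Q_d) = mdim(Q_d). -/

import Mathlib

/-- Distance from a vertex `s` to an edge `e` (as an element of `Sym2 V`):
the minimum of the distances from `s` to the two endpoints of `e`. -/
noncomputable def edgeDist {V : Type*} (G : SimpleGraph V) (e : Sym2 V) (s : V) : ℕ :=
  Sym2.lift ⟨fun x y => min (G.dist x s) (G.dist y s), fun _ _ => min_comm _ _⟩ e

/-- `S` is a metric generator for `G`: every pair of distinct vertices is
distinguished by some element of `S`. -/
def IsMetricGen {V : Type*} (G : SimpleGraph V) (S : Set V) : Prop :=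
  ∀ u v : V, u ≠ v → ∃ s ∈ S, G.dist s u ≠ G.dist s v

/-- `S` is an edge metric generator for `G`: every pair of distinct edges is
distinguished by some element of `S`. -/
def IsEdgeMetricGen {V : Type*} (G : SimpleGraph V) (S : Set V) : Prop :=
  ∀ e₁ ∈ G.edgeSet, ∀ e₂ ∈ G.edgeSet, e₁ ≠ e₂ → ∃ s ∈ S, edgeDist G e₁ s ≠ edgeDist G e₂ s

/-- Distance from a vertex `s` to a mixed element (a vertex or an edge). -/
noncomputable def mixedDist {V : Type*} (G : SimpleGraph V) (a : V ⊕ Sym2 V) (s : V) : ℕ :=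
  Sum.elim (fun w => G.dist s w) (fun e => edgeDist G e s) a

/-- A mixed element is valid if it is a vertex, or an actual edge of `G`. -/
def IsMixedElem {V : Type*} (G : SimpleGraph V) (a : V ⊕ Sym2 V) : Prop :=
  Sum.elim (fun _ => True) (fun e => e ∈ G.edgeSet) a

/-- `S` is a mixed metric generator for `G`: every pair of distinct elements of
`V(G) ∪ E(G)` is distinguished by some element of `S`. -/
def IsMixedMetricGen {V : Type*} (G : SimpleGraph V) (S : Set V) : Prop :=
  ∀ a b : V ⊕ Sym2 V, IsMixedElem G a → IsMixedElem G b → a ≠ b →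
    ∃ s ∈ S, mixedDist G a s ≠ mixedDist G b s

/-- The metric dimension: minimum cardinality of a metric generator. -/
noncomputable def metricDim {V : Type*} [Fintype V] (G : SimpleGraph V) : ℕ :=
  sInf {n | ∃ S : Finset V, S.card = n ∧ IsMetricGen G ↑S}

/-- The edge metric dimension: minimum cardinality of an edge metric generator. -/
noncomputable def edgeMetricDim {V : Type*} [Fintype V] (G : SimpleGraph V) : ℕ :=
  sInf {n | ∃ S : Finset V, S.card = n ∧ IsEdgeMetricGen G ↑S}

/-- The mixed metric dimension: minimum cardinality of a mixed metric generator. -/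
noncomputable def mixedMetricDim {V : Type*} [Fintype V] (G : SimpleGraph V) : ℕ :=
  sInf {n | ∃ S : Finset V, S.card = n ∧ IsMixedMetricGen G ↑S}

/-- The hypercube `Q_d`: vertices are binary vectors of length `d`, with two
vertices adjacent iff they differ in exactly one coordinate. -/
def cube (d : ℕ) : SimpleGraph (Fin d → Bool) where
  Adj u v := hammingDist u v = 1
  symm := ⟨fun u v h => (hammingDist_comm v u).trans h⟩
  loopless := ⟨fun u h => absurd ((hammingDist_self u).symm.trans h) zero_ne_one⟩

/-!
In `Q_d` the graph distance is the Hamming distance, and the distance from `s` to the edge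
`{x, x + eᵢ}` is `d(s, x) - [sᵢ ≠ xᵢ]`. A resolving set `S` cannot be equidistant from `u` and
from `u` with two coordinates `k ≠ l` flipped, which says that `s ↦ s k ^^ s l` is not constant
on `S`. By parity this is what resolving edges of different directions needs (parallel edges
are resolved like their endpoints), and it forces `|S| ≥ 3` once `d ≥ 3`.

An edge resolving set `S` can only miss pairs `u, v` with `uᵢ ≠ vᵢ`, as otherwise it would miss
the edges in direction `i` at `u` and at `v`; the neighbour `s₀ + eᵢ` of any `s₀ ∈ S` resolves
those pairs.

A resolving set on which no coordinate is constant also resolves every vertex from every edge,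
again by parity. Replacing some elements of a resolving set by their antipodes keeps it
resolving, and some choice makes every coordinate non-constant on `S`: otherwise four suitable
coordinates, flipped two at a time, would give two vertices equidistant from all of `S`.
-/

open Finset Function

theorem hammingDist_update_add {ι : Type*} [Fintype ι] [DecidableEq ι] {β : ι → Type*}
    [∀ i, DecidableEq (β i)] (s x : ∀ i, β i) (i : ι) (b : β i) :
    hammingDist s (update x i b) + (if s i = x i then 0 else 1) =
      hammingDist s x + (if s i = b then 0 else 1) := by
  simp only [hammingDist, card_filter]
  rw [← add_sum_erase _ _ (mem_univ i), ← add_sum_erase _ _ (mem_univ i),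
    sum_congr rfl fun j hj => by rw [update_of_ne (ne_of_mem_erase hj)]]
  simp only [update_self, ne_eq, ite_not]
  omega

theorem even_hammingDist_add_hammingDist_add_hammingDist {ι : Type*} [Fintype ι]
    (x y z : ι → Bool) : Even (hammingDist x y + hammingDist y z + hammingDist x z) := by
  simp only [hammingDist, card_filter, ← sum_add_distrib]
  refine even_sum _ fun i _ => ?_
  cases x i <;> cases y i <;> cases z i <;> decide

theorem hammingDist_not_add {ι : Type*} [Fintype ι] (s u : ι → Bool) :
    hammingDist (fun j => !s j) u + hammingDist s u = Fintype.card ι := by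
  rw [← card_univ, card_eq_sum_ones]
  simp only [hammingDist, card_filter, ← sum_add_distrib]
  exact sum_congr rfl fun j _ => by cases s j <;> cases u j <;> rfl

theorem sInf_card_le_add {V : Type*} {P Q : Finset V → Prop} (k : ℕ) (hP : ∃ S, P S)
    (hPQ : ∀ S, P S → ∃ T, Q T ∧ T.card ≤ S.card + k) :
    sInf {n | ∃ T, T.card = n ∧ Q T} ≤ sInf {n | ∃ S, S.card = n ∧ P S} + k := by
  obtain ⟨S₀, hS₀⟩ := hP
  obtain ⟨S, hS, hPS⟩ := Nat.sInf_mem (s := {n | ∃ S, S.card = n ∧ P S}) ⟨_, S₀, rfl, hS₀⟩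
  obtain ⟨T, hQT, hcard⟩ := hPQ S hPS
  have hT : T.card ∈ {n | ∃ T, T.card = n ∧ Q T} := ⟨T, rfl, hQT⟩
  exact (Nat.sInf_le hT).trans (hS ▸ hcard)

theorem IsMixedMetricGen.isMetricGen {V : Type*} {G : SimpleGraph V} {S : Set V}
    (h : IsMixedMetricGen G S) : IsMetricGen G S := fun u v huv =>
  h (.inl u) (.inl v) trivial trivial (by simpa using huv)

namespace Cube

variable {d : ℕ} {S : Set (Fin d → Bool)}

def flipAt (i : Fin d) (x : Fin d → Bool) : Fin d → Bool := update x i (!x i)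

@[simp] theorem flipAt_apply_self (i : Fin d) (x : Fin d → Bool) : flipAt i x i = !x i :=
  update_self _ _ _

@[simp] theorem flipAt_apply_of_ne {i j : Fin d} (h : j ≠ i) (x : Fin d → Bool) :
    flipAt i x j = x j :=
  update_of_ne h _ _

@[simp] theorem flipAt_flipAt (i : Fin d) (x : Fin d → Bool) : flipAt i (flipAt i x) = x := by
  funext j
  by_cases h : j = i
  · subst h; simp
  · simp [h]

theorem flipAt_ne (i : Fin d) (x : Fin d → Bool) : flipAt i x ≠ x :=
  fun h => by simpa using congrFun h i

theorem hammingDist_flipAt_add (s x : Fin d → Bool) (i : Fin d) :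
    hammingDist s (flipAt i x) + (if s i = x i then 0 else 1) =
      hammingDist s x + (if s i = x i then 1 else 0) := by
  rw [flipAt, hammingDist_update_add]
  cases s i <;> cases x i <;> rfl

theorem cube_adj_flipAt (i : Fin d) (x : Fin d → Bool) : (cube d).Adj x (flipAt i x) := by
  show hammingDist x (flipAt i x) = 1
  simpa using hammingDist_flipAt_add x x i

theorem cube_adj_iff {x y : Fin d → Bool} : (cube d).Adj x y ↔ ∃ i, y = flipAt i x := by
  refine ⟨fun h => ?_, by rintro ⟨i, rfl⟩; exact cube_adj_flipAt i x⟩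
  obtain ⟨i, hi⟩ := card_eq_one.mp (show hammingDist x y = 1 from h)
  have hdiff : ∀ j, x j ≠ y j ↔ j = i := fun j => by
    simpa using congrArg (j ∈ ·) hi
  refine ⟨i, funext fun j => ?_⟩
  by_cases hj : j = i
  · subst hj
    have := (hdiff j).mpr rfl
    cases hx : x j <;> simp_all
  · rw [flipAt_apply_of_ne hj]
    exact (not_not.mp ((hdiff j).not.mpr hj)).symm

theorem exists_walk_length_eq_hammingDist (u v : Fin d → Bool) :
    ∃ p : (cube d).Walk u v, p.length = hammingDist u v := by
  induction h : hammingDist u v generalizing u with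
  | zero => obtain rfl := hammingDist_eq_zero.mp h; exact ⟨.nil, rfl⟩
  | succ n ih =>
    obtain ⟨i, hi⟩ : ∃ i, u i ≠ v i := by
      by_contra! hc
      simp [funext hc] at h
    have hcloser : hammingDist (flipAt i u) v = n := by
      have := hammingDist_flipAt_add v u i
      rw [hammingDist_comm v, hammingDist_comm v, h] at this
      cases hu : u i <;> cases hv : v i <;> simp_all
    obtain ⟨p, hp⟩ := ih (flipAt i u) hcloser
    exact ⟨.cons (cube_adj_flipAt i u) p, by simp [hp]⟩

theorem hammingDist_le_length {u v : Fin d → Bool} (p : (cube d).Walk u v) :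
    hammingDist u v ≤ p.length := by
  induction p with
  | nil => simp
  | @cons a b c hab p ih =>
    have : hammingDist a b = 1 := hab
    have := hammingDist_triangle a b c
    simp only [SimpleGraph.Walk.length_cons]
    omega

@[simp] theorem cube_dist (u v : Fin d → Bool) : (cube d).dist u v = hammingDist u v := by
  obtain ⟨p, hp⟩ := exists_walk_length_eq_hammingDist u v
  refine le_antisymm (hp ▸ SimpleGraph.dist_le p) ?_
  obtain ⟨q, hq⟩ := SimpleGraph.Reachable.exists_walk_length_eq_dist ⟨p⟩
  exact hq ▸ hammingDist_le_length q

theorem hammingDist_flipAt_flipAt_add (s x : Fin d → Bool) {k l : Fin d} (hkl : k ≠ l) :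
    hammingDist s (flipAt k (flipAt l x)) + (if s k = x k then 0 else 1) +
        (if s l = x l then 0 else 1) =
      hammingDist s x + (if s k = x k then 1 else 0) + (if s l = x l then 1 else 0) := by
  have hk := hammingDist_flipAt_add s (flipAt l x) k
  have hl := hammingDist_flipAt_add s x l
  rw [flipAt_apply_of_ne hkl] at hk
  split_ifs at hk hl ⊢ <;> omega

theorem edgeDist_flipAt_add (s x : Fin d → Bool) (i : Fin d) :
    edgeDist (cube d) s(x, flipAt i x) s + (if s i = x i then 0 else 1) = hammingDist s x := by
  have := hammingDist_flipAt_add s x i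
  simp only [edgeDist, Sym2.lift_mk, cube_dist, hammingDist_comm _ s]
  split_ifs at this ⊢ <;> omega

theorem exists_eq_flipAt_of_mem_edgeSet {e : Sym2 (Fin d → Bool)} (he : e ∈ (cube d).edgeSet) :
    ∃ x i, x i = false ∧ e = s(x, flipAt i x) := by
  induction e using Sym2.ind with
  | _ x y =>
    obtain ⟨i, rfl⟩ := cube_adj_iff.mp ((SimpleGraph.mem_edgeSet _).mp he)
    cases hx : x i
    · exact ⟨x, i, hx, rfl⟩
    · exact ⟨flipAt i x, i, by simp [hx], by rw [flipAt_flipAt, Sym2.eq_swap]⟩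

theorem _root_.IsMetricGen.exists_xor_eq (hS : IsMetricGen (cube d) S)
    {k l : Fin d} (hkl : k ≠ l) (b : Bool) : ∃ s ∈ S, (s k ^^ s l) = b := by
  set u : Fin d → Bool := update (fun _ => false) k b
  have hne : u ≠ flipAt k (flipAt l u) := fun h => by
    simpa [flipAt_apply_of_ne hkl] using congrFun h k
  obtain ⟨s, hs, hdist⟩ := hS _ _ hne
  refine ⟨s, hs, by_contra fun hb => hdist ?_⟩
  have := hammingDist_flipAt_flipAt_add s u hkl
  have hu : u k = b ∧ u l = false := by simp [u, Ne.symm hkl]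
  rw [hu.1, hu.2] at this
  simp only [cube_dist]
  cases hk : s k <;> cases hl : s l <;> cases b <;> simp_all

theorem _root_.IsMetricGen.le_two_of_subset_pair (hS : IsMetricGen (cube d) S)
    {a b : Fin d → Bool} (hab : ∀ r ∈ S, r = a ∨ r = b) : d ≤ 2 := by
  have hinj : Injective fun k => (a k ^^ b k) := by
    intro k l hkl
    by_contra hne
    obtain ⟨r, hr, hrx⟩ := hS.exists_xor_eq hne (!(a k ^^ a l))
    rcases hab r hr with rfl | rfl
    · simp at hrx
    · simp only at hkl
      cases hak : r k <;> cases hal : r l <;> cases a k <;> cases a l <;> simp_all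
  simpa using Fintype.card_le_of_injective _ hinj

theorem _root_.IsMetricGen.exists_three_ne (hS : IsMetricGen (cube d) S)
    (hd : 3 ≤ d) : ∃ s₀ ∈ S, ∃ s₁ ∈ S, ∃ s₂ ∈ S, s₀ ≠ s₁ ∧ s₀ ≠ s₂ ∧ s₁ ≠ s₂ := by
  have h01 : (⟨0, by omega⟩ : Fin d) ≠ ⟨1, by omega⟩ := by simp
  obtain ⟨a, ha, hxa⟩ := hS.exists_xor_eq h01 false
  obtain ⟨b, hb, hxb⟩ := hS.exists_xor_eq h01 true
  have hab : a ≠ b := by rintro rfl; simp_all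
  by_contra! h
  have := hS.le_two_of_subset_pair (a := a) (b := b) fun r hr =>
    or_iff_not_imp_left.mpr fun hra => (h a ha b hb r hr hab (Ne.symm hra)).symm
  omega

theorem _root_.IsMetricGen.false_of_columns (hS : IsMetricGen (cube d) S)
    {s₀ s₁ s₂ : Fin d → Bool} (hs₀ : s₀ ∈ S) (hs₁ : s₁ ∈ S) (h01 : s₀ ≠ s₁)
    {j₁ j₂ j₃ j₄ : Fin d} (h₁ : ∀ s ∈ S, s j₁ = s₂ j₁)
    (h₂ : ∀ s ∈ S, s j₂ = (s₂ j₂ ^^ decide (s = s₀)))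
    (h₃ : ∀ s ∈ S, s j₃ = (s₂ j₃ ^^ decide (s = s₁)))
    (h₄ : ∀ s ∈ S, s j₄ = (s₂ j₄ ^^ decide (s = s₀ ∨ s = s₁))) : False := by
  have h12 : j₁ ≠ j₂ := by rintro rfl; simpa [h₁ s₀ hs₀] using h₂ s₀ hs₀
  have h13 : j₁ ≠ j₃ := by rintro rfl; simpa [h₁ s₁ hs₁] using h₃ s₁ hs₁
  have h14 : j₁ ≠ j₄ := by rintro rfl; simpa [h₁ s₀ hs₀] using h₄ s₀ hs₀
  have h23 : j₂ ≠ j₃ := by rintro rfl; simpa [h₂ s₀ hs₀, h01] using h₃ s₀ hs₀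
  -- `s₂` flipped in `{j₂, j₃}` and `s₂` flipped in `{j₁, j₄}` are equidistant from all of `S`
  have hne : flipAt j₂ (flipAt j₃ s₂) ≠ flipAt j₁ (flipAt j₄ s₂) := fun h => by
    simpa [h12, h13, h14] using congrFun h j₁
  obtain ⟨s, hs, hdist⟩ := hS _ _ hne
  apply hdist
  have hu := hammingDist_flipAt_flipAt_add s s₂ h23
  have hv := hammingDist_flipAt_flipAt_add s s₂ h14
  rw [h₂ s hs, h₃ s hs] at hu
  rw [h₁ s hs, h₄ s hs] at hv
  simp only [cube_dist]
  by_cases e₀ : s = s₀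
  · subst e₀
    simp [h01] at hu hv
    omega
  by_cases e₁ : s = s₁
  · subst e₁
    simp [Ne.symm h01] at hu hv
    omega
  · simp [e₀, e₁] at hu hv
    omega

theorem _root_.IsMetricGen.exists_xor_balanced (hS : IsMetricGen (cube d) S) (hd : 3 ≤ d) :
    ∃ η : (Fin d → Bool) → Bool, ∀ j b, ∃ s ∈ S, (s j ^^ η s) = b := by
  obtain ⟨s₀, hs₀, s₁, hs₁, s₂, hs₂, h01, h02, h12⟩ := hS.exists_three_ne hd
  by_contra! h
  have column : ∀ η : (Fin d → Bool) → Bool, η s₂ = false →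
      ∃ j, ∀ s ∈ S, s j = (s₂ j ^^ η s) := by
    intro η hη
    obtain ⟨j, b, hj⟩ := h η
    refine ⟨j, fun s hs => ?_⟩
    have h₂ := hj s₂ hs₂
    have h := hj s hs
    rw [hη] at h₂
    revert h h₂
    cases s j <;> cases s₂ j <;> cases η s <;> cases b <;> decide
  obtain ⟨j₁, h₁⟩ := column (fun _ => false) rfl
  obtain ⟨j₂, h₂⟩ := column (fun s => decide (s = s₀)) (by simpa using h02.symm)
  obtain ⟨j₃, h₃⟩ := column (fun s => decide (s = s₁)) (by simpa using h12.symm)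
  obtain ⟨j₄, h₄⟩ := column (fun s => decide (s = s₀ ∨ s = s₁)) (by simp [h02.symm, h12.symm])
  exact hS.false_of_columns hs₀ hs₁ h01 (by simpa using h₁) h₂ h₃ h₄

theorem isMetricGen_univ : IsMetricGen (cube d) Set.univ := fun u v huv =>
  ⟨u, trivial, by simpa [eq_comm] using huv⟩

theorem _root_.IsMetricGen.image_xor (hS : IsMetricGen (cube d) S)
    (η : (Fin d → Bool) → Bool) : IsMetricGen (cube d) ((fun s j => s j ^^ η s) '' S) := by
  intro u v huv
  obtain ⟨s, hs, h⟩ := hS u v huv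
  refine ⟨_, Set.mem_image_of_mem _ hs, ?_⟩
  have hu := hammingDist_not_add s u
  have hv := hammingDist_not_add s v
  cases η s <;> simp only [cube_dist, Bool.xor_false, Bool.xor_true] at h ⊢ <;> omega

theorem _root_.IsMetricGen.isEdgeMetricGen (hS : IsMetricGen (cube d) S) :
    IsEdgeMetricGen (cube d) S := by
  intro e₁ he₁ e₂ he₂ hne
  obtain ⟨x, i, hx, rfl⟩ := exists_eq_flipAt_of_mem_edgeSet he₁
  obtain ⟨z, j, hz, rfl⟩ := exists_eq_flipAt_of_mem_edgeSet he₂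
  by_contra! h
  have key : ∀ s ∈ S, hammingDist s x + (if s j = false then 0 else 1) =
      hammingDist s z + (if s i = false then 0 else 1) := fun s hs => by
    have hex := edgeDist_flipAt_add s x i
    have hez := edgeDist_flipAt_add s z j
    rw [hx] at hex
    rw [hz] at hez
    have := h s hs
    omega
  rcases eq_or_ne i j with rfl | hij
  · refine hne (congrArg (fun y => s(y, flipAt i y)) ?_)
    by_contra hxz
    obtain ⟨s, hs, hs'⟩ := hS x z hxz
    have := key s hs
    simp only [cube_dist] at hs'
    omega
  · -- by parity `s i + s j ≡ d(x, z) (mod 2)` on `S`, but `s i ^^ s j` is not constant on `S`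
    obtain ⟨s, hs, hs'⟩ := hS.exists_xor_eq hij false
    obtain ⟨t, ht, ht'⟩ := hS.exists_xor_eq hij true
    obtain ⟨m, hm⟩ := even_hammingDist_add_hammingDist_add_hammingDist s x z
    obtain ⟨m', hm'⟩ := even_hammingDist_add_hammingDist_add_hammingDist t x z
    have hks := key s hs
    have hkt := key t ht
    revert hs' ht' hks hkt
    cases s i <;> cases s j <;> cases t i <;> cases t j <;> simp <;> omega

theorem exists_hammingDist_ne_edgeDist (hS : ∀ j b, ∃ s ∈ S, s j = b) (w : Fin d → Bool)
    {e : Sym2 (Fin d → Bool)} (he : e ∈ (cube d).edgeSet) :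
    ∃ s ∈ S, hammingDist s w ≠ edgeDist (cube d) e s := by
  obtain ⟨x, i, hx, rfl⟩ := exists_eq_flipAt_of_mem_edgeSet he
  obtain ⟨s, hs, hsi⟩ := hS i false
  obtain ⟨t, ht, hti⟩ := hS i true
  by_contra! h
  have hes := edgeDist_flipAt_add s x i
  have het := edgeDist_flipAt_add t x i
  rw [hx, hsi, ← h s hs, if_pos rfl] at hes
  rw [hx, hti, ← h t ht, if_neg (by decide)] at het
  obtain ⟨m, hm⟩ := even_hammingDist_add_hammingDist_add_hammingDist s w t
  obtain ⟨m', hm'⟩ := even_hammingDist_add_hammingDist_add_hammingDist s x t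
  rw [hammingDist_comm w] at hm
  rw [hammingDist_comm x] at hm'
  omega

theorem _root_.IsMetricGen.isMixedMetricGen (hS : IsMetricGen (cube d) S)
    (hbal : ∀ j b, ∃ s ∈ S, s j = b) : IsMixedMetricGen (cube d) S := by
  rintro (u | e₁) (v | e₂) ha hb hab
  · exact hS u v (by rintro rfl; exact hab rfl)
  · simpa [mixedDist] using exists_hammingDist_ne_edgeDist hbal u hb
  · simpa [mixedDist, eq_comm] using exists_hammingDist_ne_edgeDist hbal v ha
  · exact hS.isEdgeMetricGen e₁ ha e₂ hb (by rintro rfl; exact hab rfl)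

theorem _root_.IsEdgeMetricGen.nonempty (hE : IsEdgeMetricGen (cube d) S) (hd : 2 ≤ d) :
    S.Nonempty := by
  let i₀ : Fin d := ⟨0, by omega⟩
  let i₁ : Fin d := ⟨1, by omega⟩
  have hne : s(0, flipAt i₀ 0) ≠ s(0, flipAt i₁ 0) := by
    have h01 : i₀ ≠ i₁ := by simp [i₀, i₁]
    rw [Ne, Sym2.eq_iff]
    rintro (⟨-, h⟩ | ⟨h, -⟩)
    · simpa [h01] using congrFun h i₀
    · exact flipAt_ne i₁ 0 h.symm
  obtain ⟨s, hs, -⟩ := hE _ (cube_adj_flipAt i₀ 0) _ (cube_adj_flipAt i₁ 0) hne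
  exact ⟨s, hs⟩

theorem _root_.IsEdgeMetricGen.isMetricGen_insert_flipAt (hE : IsEdgeMetricGen (cube d) S)
    {s₀ : Fin d → Bool} (hs₀ : s₀ ∈ S) (i : Fin d) :
    IsMetricGen (cube d) (insert (flipAt i s₀) S) := by
  intro u v huv
  by_contra! h
  simp only [cube_dist, Set.mem_insert_iff, forall_eq_or_imp] at h
  by_cases hi : u i = v i
  · -- then the edges in direction `i` at `u` and at `v` are equidistant from `S`
    have hne : s(u, flipAt i u) ≠ s(v, flipAt i v) := by
      rw [Ne, Sym2.eq_iff]
      rintro (⟨h', -⟩ | ⟨h', -⟩)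
      · exact huv h'
      · simpa [hi] using congrFun h' i
    obtain ⟨s, hs, hs'⟩ := hE _ (cube_adj_flipAt i u) _ (cube_adj_flipAt i v) hne
    have hu := edgeDist_flipAt_add s u i
    have hv := edgeDist_flipAt_add s v i
    rw [← hi] at hv
    have := h.2 s hs
    omega
  · -- flipping coordinate `i` of `s₀` moves it towards one of `u, v` and away from the other
    have hu := hammingDist_flipAt_add u s₀ i
    have hv := hammingDist_flipAt_add v s₀ i
    have h₁ := h.1
    have h₂ := h.2 s₀ hs₀
    simp only [hammingDist_comm (flipAt i s₀), hammingDist_comm s₀] at h₁ h₂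
    revert hi hu hv
    cases u i <;> cases v i <;> cases s₀ i <;> simp <;> omega

theorem isMixedMetricGen_univ : IsMixedMetricGen (cube d) Set.univ :=
  isMetricGen_univ.isMixedMetricGen fun _ b => ⟨fun _ => b, trivial, rfl⟩

theorem _root_.IsMetricGen.exists_isMixedMetricGen_card_le {S : Finset (Fin d → Bool)}
    (hS : IsMetricGen (cube d) ↑S) (hd : 3 ≤ d) :
    ∃ T : Finset (Fin d → Bool), IsMixedMetricGen (cube d) ↑T ∧ T.card ≤ S.card := by
  obtain ⟨η, hη⟩ := hS.exists_xor_balanced hd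
  refine ⟨S.image fun s j => s j ^^ η s, ?_, card_image_le⟩
  rw [coe_image]
  exact (hS.image_xor η).isMixedMetricGen fun j b => by simpa using hη j b

theorem _root_.IsEdgeMetricGen.exists_isMetricGen_card_le_add_one {S : Finset (Fin d → Bool)}
    (hE : IsEdgeMetricGen (cube d) ↑S) (hd : 2 ≤ d) :
    ∃ T : Finset (Fin d → Bool), IsMetricGen (cube d) ↑T ∧ T.card ≤ S.card + 1 := by
  obtain ⟨s₀, hs₀⟩ := hE.nonempty hd
  refine ⟨insert (flipAt ⟨0, by omega⟩ s₀) S, ?_, card_insert_le _ _⟩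
  simpa using hE.isMetricGen_insert_flipAt hs₀ _

end Cube

/-- For every `d ≥ 3`,
`dim(Q_d) - 1 ≤ edim(Q_d) ≤ dim(Q_d) = mdim(Q_d)`. -/
theorem stmt18 (d : ℕ) (hd : 3 ≤ d) :
    metricDim (cube d) - 1 ≤ edgeMetricDim (cube d) ∧
      edgeMetricDim (cube d) ≤ metricDim (cube d) ∧
      metricDim (cube d) = mixedMetricDim (cube d) := by
  have hM : ∃ S : Finset (Fin d → Bool), IsMetricGen (cube d) ↑S :=
    ⟨univ, by simpa using Cube.isMetricGen_univ⟩
  have hX : ∃ S : Finset (Fin d → Bool), IsMixedMetricGen (cube d) ↑S :=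
    ⟨univ, by simpa using Cube.isMixedMetricGen_univ⟩
  have hdim_le_edim : metricDim (cube d) ≤ edgeMetricDim (cube d) + 1 :=
    sInf_card_le_add 1 (hM.imp fun _ => IsMetricGen.isEdgeMetricGen) fun _ hE =>
      hE.exists_isMetricGen_card_le_add_one (by omega)
  have hedim_le_dim : edgeMetricDim (cube d) ≤ metricDim (cube d) :=
    sInf_card_le_add 0 hM fun S hS => ⟨S, hS.isEdgeMetricGen, le_rfl⟩
  have hdim_le_mdim : metricDim (cube d) ≤ mixedMetricDim (cube d) :=
    sInf_card_le_add 0 hX fun S hS => ⟨S, IsMixedMetricGen.isMetricGen hS, le_rfl⟩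
  have hmdim_le_dim : mixedMetricDim (cube d) ≤ metricDim (cube d) :=
    sInf_card_le_add 0 hM fun _ hS => hS.exists_isMixedMetricGen_card_le hd
  exact ⟨by omega, hedim_le_dim, le_antisymm hdim_le_mdim hmdim_le_dim⟩
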